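/- For W = S_3 with Coxeter word c = (s_1, s_2) and p = 4, the sum over v ∈ S_3 of the twisted R-polynomials R^{(v)}_{e,c^4}(q) equals (q-1)^2 [4]_q^2 = (q-1)^2 (1+q+q^2+q^3)^2. -/
import Mathlib


open scoped Classical

namespace Deodhar

/-- Auxiliary recursion for the twisted `R`-polynomials `R^{(v)}_{u,w}(q)`, processing
the word from the right (the list argument is the reversed word):
`R^{(v)}_{u,∅} = δ_{u,e}`; `R^{(v)}_{u,ws} = R^{(v)}_{us,w}` if `vus < vu`, and
`R^{(v)}_{u,ws} = q·R^{(v)}_{us,w} + (q-1)·R^{(v)}_{u,w}` if `vus > vu`. -/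
noncomputable def Rvaux {B : Type*} {W : Type*} [Group W] {M : CoxeterMatrix B}
    (cs : CoxeterSystem M W) (v : W) : List B → W → Polynomial ℤ
  | [], u => if u = 1 then 1 else 0
  | i :: rest, u =>
    if cs.length (v * (u * cs.simple i)) < cs.length (v * u) then
      Rvaux cs v rest (u * cs.simple i)
    else Polynomial.X * Rvaux cs v rest (u * cs.simple i) +
      (Polynomial.X - 1) * Rvaux cs v rest u

/-- The twisted `R`-polynomial `R^{(v)}_{u,w}(q)`. -/
noncomputable def Rvpol {B : Type*} {W : Type*} [Group W] {M : CoxeterMatrix B}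
    (cs : CoxeterSystem M W) (v : W) (w : List B) (u : W) : Polynomial ℤ :=
  Rvaux cs v w.reverse u

end Deodhar

section S3Aux

variable {W : Type*} [Group W] (cs : CoxeterSystem (CoxeterMatrix.Aₙ 2) W)

theorem braid_s3 : cs.simple 0 * cs.simple 1 * cs.simple 0
    = cs.simple 1 * cs.simple 0 * cs.simple 1 := by
  have h3 : (cs.simple 0 * cs.simple 1) ^ 3 = 1 := by
    have h := cs.simple_mul_simple_pow 0 1
    have hM : (CoxeterMatrix.Aₙ 2) 0 1 = 3 := rfl
    rwa [hM] at h
  have h2 : (cs.simple 0 * cs.simple 1) ^ 2 * (cs.simple 0 * cs.simple 1) = 1 := by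
    rw [← pow_succ]; exact h3
  have h4 := eq_inv_of_mul_eq_one_left h2
  rw [pow_two, mul_inv_rev, cs.inv_simple, cs.inv_simple] at h4
  have h5 : cs.simple 0 * cs.simple 1 * (cs.simple 0 * cs.simple 1) * cs.simple 1
      = cs.simple 1 * cs.simple 0 * cs.simple 1 := by rw [h4]
  rwa [← mul_assoc, cs.simple_mul_simple_cancel_right] at h5

theorem braid1_s3 : cs.simple 1 * (cs.simple 0 * cs.simple 1)
    = cs.simple 0 * (cs.simple 1 * cs.simple 0) := by
  rw [← mul_assoc, ← mul_assoc, braid_s3]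

theorem braid2_s3 (w : W) : cs.simple 1 * (cs.simple 0 * (cs.simple 1 * w))
    = cs.simple 0 * (cs.simple 1 * (cs.simple 0 * w)) := by
  rw [← mul_assoc, ← mul_assoc, ← mul_assoc, ← mul_assoc, braid_s3]

theorem cover_s3 (w : W) : w = 1 ∨ w = cs.simple 0 ∨ w = cs.simple 1
    ∨ w = cs.simple 0 * cs.simple 1 ∨ w = cs.simple 1 * cs.simple 0
    ∨ w = cs.simple 0 * (cs.simple 1 * cs.simple 0) := by
  obtain ⟨ω, -, rfl⟩ := cs.exists_reduced_word' w
  induction ω with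
  | nil => left; simp [CoxeterSystem.wordProd_nil]
  | cons i ω ih =>
    rw [cs.wordProd_cons]
    fin_cases i <;> rcases ih with h|h|h|h|h|h <;> rw [h] <;>
      simp [mul_assoc, cs.simple_mul_simple_self, cs.simple_mul_simple_cancel_left,
        braid1_s3, braid2_s3]

end S3Aux

section S3Aux2
variable {W : Type*} [Group W] (cs : CoxeterSystem (CoxeterMatrix.Aₙ 2) W)

theorem liftable_s3 : CoxeterMatrix.IsLiftable (CoxeterMatrix.Aₙ 2)
    (![Equiv.swap 0 1, Equiv.swap 1 2] : Fin 2 → Equiv.Perm (Fin 3)) := by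
  intro i i'
  fin_cases i <;> fin_cases i' <;> decide

noncomputable def phi_s3 : W →* Equiv.Perm (Fin 3) :=
  cs.lift ⟨![Equiv.swap 0 1, Equiv.swap 1 2], liftable_s3⟩

theorem phi_s3_simple (i : Fin 2) :
    phi_s3 cs (cs.simple i) = ![Equiv.swap 0 1, Equiv.swap 1 2] i :=
  cs.lift_apply_simple liftable_s3 i

theorem phi_s3_0 : phi_s3 cs (cs.simple 0) = Equiv.swap 0 1 :=
  cs.lift_apply_simple liftable_s3 0

theorem phi_s3_1 : phi_s3 cs (cs.simple 1) = Equiv.swap 1 2 :=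
  cs.lift_apply_simple liftable_s3 1

-- distinctness tests
example : cs.simple 0 * cs.simple 1 ≠ 1 := by
  intro h
  have := congrArg (phi_s3 cs) h
  simp only [map_mul, map_one, phi_s3_0, phi_s3_1] at this
  exact absurd this (by decide)

theorem len_ab_s3 : cs.length (cs.simple 0 * cs.simple 1) = 2 := by
  have hne : cs.simple 0 * cs.simple 1 ≠ 1 := by
    intro h
    have := congrArg (phi_s3 cs) h
    simp only [map_mul, map_one, phi_s3_0, phi_s3_1] at this
    exact absurd this (by decide)
  have h1 : cs.length (cs.simple 0 * cs.simple 1) ≤ 2 := by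
    have := cs.length_mul_le (cs.simple 0) (cs.simple 1)
    simpa [cs.length_simple] using this
  have h2 := cs.length_mul_mod_two (cs.simple 0) (cs.simple 1)
  rw [cs.length_simple, cs.length_simple] at h2
  have h0 : cs.length (cs.simple 0 * cs.simple 1) ≠ 0 := by
    rw [Ne, cs.length_eq_zero_iff]; exact hne
  omega

theorem len_ba_s3 : cs.length (cs.simple 1 * cs.simple 0) = 2 := by
  have hne : cs.simple 1 * cs.simple 0 ≠ 1 := by
    intro h
    have := congrArg (phi_s3 cs) h
    simp only [map_mul, map_one, phi_s3_0, phi_s3_1] at this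
    exact absurd this (by decide)
  have h1 : cs.length (cs.simple 1 * cs.simple 0) ≤ 2 := by
    have := cs.length_mul_le (cs.simple 1) (cs.simple 0)
    simpa [cs.length_simple] using this
  have h2 := cs.length_mul_mod_two (cs.simple 1) (cs.simple 0)
  rw [cs.length_simple, cs.length_simple] at h2
  have h0 : cs.length (cs.simple 1 * cs.simple 0) ≠ 0 := by
    rw [Ne, cs.length_eq_zero_iff]; exact hne
  omega

theorem len_aba_s3 : cs.length (cs.simple 0 * (cs.simple 1 * cs.simple 0)) = 3 := by
  have h1 : cs.length (cs.simple 0 * (cs.simple 1 * cs.simple 0)) ≤ 3 := by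
    have := cs.length_mul_le (cs.simple 0) (cs.simple 1 * cs.simple 0)
    rw [cs.length_simple, len_ba_s3] at this
    exact this
  have h2 := cs.length_mul_mod_two (cs.simple 0) (cs.simple 1 * cs.simple 0)
  rw [cs.length_simple, len_ba_s3] at h2
  have hne1 : cs.length (cs.simple 0 * (cs.simple 1 * cs.simple 0)) ≠ 1 := by
    rw [Ne, cs.length_eq_one_iff]
    rintro ⟨i, hi⟩
    have := congrArg (phi_s3 cs) hi
    rw [map_mul, map_mul, phi_s3_0, phi_s3_1, phi_s3_simple] at this
    revert this
    fin_cases i <;> decide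
  omega

end S3Aux2

section S3Aux3
variable {W : Type*} [Group W] (cs : CoxeterSystem (CoxeterMatrix.Aₙ 2) W)

theorem ne_of_phi_s3 {x y : W} (h : phi_s3 cs x ≠ phi_s3 cs y) : x ≠ y :=
  fun he => h (congrArg _ he)

theorem univ_s3 [Fintype W] : (Finset.univ : Finset W)
    = ({1, cs.simple 0, cs.simple 1, cs.simple 0 * cs.simple 1,
        cs.simple 1 * cs.simple 0, cs.simple 0 * (cs.simple 1 * cs.simple 0)} : Finset W) := by
  apply Finset.ext
  intro w
  simp only [Finset.mem_univ, true_iff, Finset.mem_insert, Finset.mem_singleton]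
  exact cover_s3 cs w

theorem a_ne_one_s3 : cs.simple 0 ≠ 1 :=
  ne_of_phi_s3 cs (by simp only [map_mul, map_one, phi_s3_0, phi_s3_1]; decide)

theorem b_ne_one_s3 : cs.simple 1 ≠ 1 :=
  ne_of_phi_s3 cs (by simp only [map_mul, map_one, phi_s3_0, phi_s3_1]; decide)

theorem ab_ne_one_s3 : cs.simple 0 * cs.simple 1 ≠ 1 :=
  ne_of_phi_s3 cs (by simp only [map_mul, map_one, phi_s3_0, phi_s3_1]; decide)

theorem ba_ne_one_s3 : cs.simple 1 * cs.simple 0 ≠ 1 :=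
  ne_of_phi_s3 cs (by simp only [map_mul, map_one, phi_s3_0, phi_s3_1]; decide)

theorem aba_ne_one_s3 : cs.simple 0 * (cs.simple 1 * cs.simple 0) ≠ 1 :=
  ne_of_phi_s3 cs (by simp only [map_mul, map_one, phi_s3_0, phi_s3_1]; decide)

end S3Aux3



set_option maxHeartbeats 1600000 in
open Deodhar in
/-- For `W = S_3` (any Coxeter system of type `A_2`, with simple
reflections indexed `0, 1`), Coxeter word `c = (s_1, s_2)` and `p = 4`, the sum over
`v ∈ S_3` of the twisted `R`-polynomials `R^{(v)}_{e,c^4}(q)` equals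
`(q-1)^2 [4]_q^2 = (q-1)^2 (1+q+q^2+q^3)^2`. -/
theorem sum_twisted_rpol_S3
    {W : Type*} [Group W] [Fintype W] (cs : CoxeterSystem (CoxeterMatrix.Aₙ 2) W) :
    (∑ v : W, Rvpol cs v ([0, 1, 0, 1, 0, 1, 0, 1] : List (Fin 2)) 1)
      = (Polynomial.X - 1) ^ 2 *
        (1 + Polynomial.X + Polynomial.X ^ 2 + Polynomial.X ^ 3) ^ 2 := by
  rw [univ_s3 cs]
  rw [Finset.sum_insert (by
    simp only [Finset.mem_insert, Finset.mem_singleton, not_or]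
    and_intros <;> (apply ne_of_phi_s3 cs; simp only [map_mul, map_one, phi_s3_0, phi_s3_1]; decide))]
  rw [Finset.sum_insert (by
    simp only [Finset.mem_insert, Finset.mem_singleton, not_or]
    and_intros <;> (apply ne_of_phi_s3 cs; simp only [map_mul, map_one, phi_s3_0, phi_s3_1]; decide))]
  rw [Finset.sum_insert (by
    simp only [Finset.mem_insert, Finset.mem_singleton, not_or]
    and_intros <;> (apply ne_of_phi_s3 cs; simp only [map_mul, map_one, phi_s3_0, phi_s3_1]; decide))]
  rw [Finset.sum_insert (by
    simp only [Finset.mem_insert, Finset.mem_singleton, not_or]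
    and_intros <;> (apply ne_of_phi_s3 cs; simp only [map_mul, map_one, phi_s3_0, phi_s3_1]; decide))]
  rw [Finset.sum_insert (by
    simp only [Finset.mem_singleton]
    apply ne_of_phi_s3 cs; simp only [map_mul, map_one, phi_s3_0, phi_s3_1]; decide)]
  rw [Finset.sum_singleton]
  simp only [Rvpol, show (([0,1,0,1,0,1,0,1] : List (Fin 2)).reverse) = [1,0,1,0,1,0,1,0] from rfl]
  simp [Rvaux, mul_assoc, cs.simple_mul_simple_self, cs.simple_mul_simple_cancel_left,
    braid1_s3, braid2_s3, cs.length_simple, len_ab_s3, len_ba_s3, len_aba_s3, a_ne_one_s3, b_ne_one_s3, ab_ne_one_s3, ba_ne_one_s3, aba_ne_one_s3]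
  ring
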